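/- The function u₀ : 𝕋 → ℝ (identifying 𝕋 with (0,2π)) defined by u₀(x) = -2 if |x - π| ≤ π/2 and u₀(x) = 0 otherwise, gives a time-independent distributional solution u(x,t) = u₀(x) of the BBM equation u_t - u_{txx} + u_x + u u_x = 0 that vanishes on a nonempty open set yet is not identically zero; in particular u_x + u u_x = u_x(1 + u) = 0 in the sense of distributions. -/
import Mathlib


open Real MeasureTheory

/-- The `2π`-periodic step function equal to `-2` for `|x - π| ≤ π/2` (on the
fundamental domain `[0,2π)`) and `0` otherwise. -/
noncomputable def bbmCounterexample (x : ℝ) : ℝ :=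
  if |x - 2 * π * ⌊x / (2 * π)⌋ - π| ≤ π / 2 then -2 else 0

lemma bbm_flux_zero (x : ℝ) :
    bbmCounterexample x + (bbmCounterexample x) ^ 2 / 2 = 0 := by
  unfold bbmCounterexample
  split <;> norm_num

/-- The function `u₀` (taking values `0` and `-2`) gives a time-independent
distributional solution `u(x,t) = u₀(x)` of the BBM equation
`u_t - u_{txx} + u_x + u u_x = 0` that vanishes on a nonempty open set yet is not
identically zero; in particular the flux derivative `u_x + u u_x = (u + u²/2)_x`
vanishes in the sense of distributions. -/
theorem bbm_ucp_counterexample :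
    (∃ V : Set ℝ, IsOpen V ∧ V.Nonempty ∧ ∀ x ∈ V, bbmCounterexample x = 0) ∧
    (∃ x : ℝ, bbmCounterexample x ≠ 0) ∧
    (∀ φ : ℝ → ℝ, ContDiff ℝ (⊤ : ℕ∞) φ → HasCompactSupport φ →
      (∫ x : ℝ, (bbmCounterexample x + (bbmCounterexample x) ^ 2 / 2) * deriv φ x) = 0) := by
  refine ⟨⟨Set.Ioo 0 (π / 2), isOpen_Ioo, ⟨π / 4, by constructor <;> nlinarith [pi_pos]⟩,
    ?_⟩, ⟨π, ?_⟩, ?_⟩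
  · intro x hx
    obtain ⟨hx0, hx1⟩ := hx
    have hpi := pi_pos
    have hfl : ⌊x / (2 * π)⌋ = 0 := by
      apply Int.floor_eq_zero_iff.mpr
      constructor
      · positivity
      · rw [div_lt_one (by positivity)]; nlinarith
    unfold bbmCounterexample
    rw [hfl]
    rw [if_neg]
    rw [abs_le]
    push_neg
    intro h
    nlinarith
  · have hpi := pi_pos
    have hfl : ⌊π / (2 * π)⌋ = 0 := by
      apply Int.floor_eq_zero_iff.mpr
      constructor
      · positivity
      · rw [div_lt_one (by positivity)]; nlinarith
    unfold bbmCounterexample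
    rw [hfl, if_pos]
    · norm_num
    · simp only [Int.cast_zero, mul_zero, zero_sub, sub_zero]
      rw [sub_self, abs_zero]
      positivity
  · intro φ _ _
    have : ∀ x : ℝ, (bbmCounterexample x + (bbmCounterexample x) ^ 2 / 2) * deriv φ x = 0 := by
      intro x; rw [bbm_flux_zero, zero_mul]
    simp [this]
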